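/- Let G be a connected finite weighted graph with possibly nonempty boundary B, and let (f, λ) be an eigenpair of the graph p-Laplacian with p > 1. If A is a nodal domain induced by f with boundary edge set E(A, A^c), then λ equals the ratio of the (p-1)-'norm' of Kf restricted to the boundary edges E(A, A^c) of A over the (p-1)-'norm' of f restricted to A. -/
import Mathlib


open Finset

/-- `A` is a strong nodal domain of `f`: a maximal connected subset of the interior
vertices on which `f` has strictly constant sign. -/
def IsStrongNodalDomain {V : Type*} (G : SimpleGraph V) (int : Set V) (f : V → ℝ)
    (A : Set V) : Prop :=
  A.Nonempty ∧ A ⊆ int ∧ ((∀ u ∈ A, 0 < f u) ∨ (∀ u ∈ A, f u < 0)) ∧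
  (G.induce A).Connected ∧
  ∀ B : Set V, A ⊆ B → B ⊆ int → ((∀ u ∈ B, 0 < f u) ∨ (∀ u ∈ B, f u < 0)) →
    (G.induce B).Connected → B = A

/-- `(f, lam)` is an eigenpair of the graph `p`-Laplacian with Dirichlet boundary `Bd`:
`f` vanishes on `Bd` and `Δ_p f(u) = lam · ν_u · |f(u)|^{p-2} f(u)` for every interior
vertex `u`, where `Δ_p f(u) = Σ_{v ∼ u} ω_{uv}^p |f(u)-f(v)|^{p-2}(f(u)-f(v))`. -/
def IsPLapEigenpair {V : Type*} [Fintype V] (G : SimpleGraph V) [DecidableRel G.Adj]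
    (ω : V → V → ℝ) (ν : V → ℝ) (Bd : Set V) (p : ℝ) (f : V → ℝ) (lam : ℝ) : Prop :=
  (∀ u ∈ Bd, f u = 0) ∧
  ∀ u, u ∉ Bd →
    (∑ v ∈ G.neighborFinset u, ω u v ^ p * |f u - f v| ^ (p - 2) * (f u - f v)) =
      lam * ν u * (|f u| ^ (p - 2) * f u)

lemma connected_insert' {V : Type*} (G : SimpleGraph V) {s : Set V}
    (hs : (G.induce s).Connected) {u v : V} (hu : u ∈ s) (huv : G.Adj u v) :
    (G.induce (insert v s)).Connected := by
  have hsub : s ⊆ insert v s := Set.subset_insert v s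
  have key : ∀ x : (insert v s : Set V),
      (G.induce (insert v s)).Reachable x ⟨u, hsub hu⟩ := by
    rintro ⟨x, hx⟩
    by_cases hxs : x ∈ s
    · exact (hs.preconnected ⟨x, hxs⟩ ⟨u, hu⟩).map (G.induceHomOfLE hsub).toHom
    · have hxv : x = v := by
        rcases hx with h | h
        · exact h
        · exact absurd h hxs
      subst hxv
      exact SimpleGraph.Adj.reachable (by simpa using huv.symm)
  constructor
  intro a b
  exact (key a).trans (key b).symm

lemma aux_pos' {x p : ℝ} (hx : 0 < x) : |x| ^ (p - 2) * x = |x| ^ (p - 1) := by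
  rw [abs_of_pos hx, show p - 1 = p - 2 + 1 by ring, Real.rpow_add hx, Real.rpow_one]

lemma aux_neg' {x p : ℝ} (hx : x < 0) : |x| ^ (p - 2) * x = -|x| ^ (p - 1) := by
  have hy : 0 < |x| := abs_pos.mpr hx.ne
  rw [show p - 1 = p - 2 + 1 by ring, Real.rpow_add hy, Real.rpow_one, abs_of_neg hx]
  ring

lemma cancel_antisym {V : Type*} (A : Finset V) (g : V → V → ℝ)
    (hg : ∀ u v, g u v = - g v u) : ∑ u ∈ A, ∑ v ∈ A, g u v = 0 := by
  have h : ∑ u ∈ A, ∑ v ∈ A, g u v = -∑ u ∈ A, ∑ v ∈ A, g u v := by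
    calc ∑ u ∈ A, ∑ v ∈ A, g u v = ∑ u ∈ A, ∑ v ∈ A, -(g v u) :=
          Finset.sum_congr rfl fun u _ => Finset.sum_congr rfl fun v _ => hg u v
      _ = -∑ u ∈ A, ∑ v ∈ A, g v u := by simp [Finset.sum_neg_distrib]
      _ = -∑ v ∈ A, ∑ u ∈ A, g v u := by rw [Finset.sum_comm]
  linarith

/-- For an eigenpair `(f, lam)` of the graph `p`-Laplacian (`p > 1`) on a
connected weighted graph with (possibly nonempty) boundary, and a nodal domain `A` of `f`,
the eigenvalue equals the ratio of the `(p-1)`-"norm" of `Kf` restricted to the boundary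
edges of `A` over the `(p-1)`-"norm" of `f` restricted to `A`. -/
theorem pLap_eigenvalue_eq_nodal_boundary_ratio {V : Type*} [Fintype V] [DecidableEq V]
    (G : SimpleGraph V) [DecidableRel G.Adj] (hconn : G.Connected)
    (ω : V → V → ℝ) (ν : V → ℝ)
    (hω : ∀ u v, G.Adj u v → 0 < ω u v) (hωs : ∀ u v, ω u v = ω v u)
    (hν : ∀ u, 0 < ν u)
    (Bd : Set V) (p : ℝ) (hp : 1 < p) (f : V → ℝ) (lam : ℝ)
    (heig : IsPLapEigenpair G ω ν Bd p f lam)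
    (A : Finset V) (hA : IsStrongNodalDomain G Bdᶜ f (A : Set V)) :
    lam =
      (∑ u ∈ A, ∑ v ∈ (G.neighborFinset u).filter (fun v => v ∉ A),
          ω u v ^ p * |f u - f v| ^ (p - 1)) /
        (∑ u ∈ A, ν u * |f u| ^ (p - 1)) := by
  obtain ⟨hAne, hAint, hsgn, hAconn, hmax⟩ := hA
  set F : V → V → ℝ := fun u v => ω u v ^ p * |f u - f v| ^ (p - 2) * (f u - f v) with hF
  -- f doesn't vanish on A
  have hfne : ∀ u ∈ A, f u ≠ 0 := by
    intro u hu
    rcases hsgn with h | h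
    · exact (h u (by exact_mod_cast hu)).ne'
    · exact (h u (by exact_mod_cast hu)).ne
  -- denominator positive
  have hD : 0 < ∑ u ∈ A, ν u * |f u| ^ (p - 1) := by
    apply Finset.sum_pos
    · intro u hu
      exact mul_pos (hν u) (Real.rpow_pos_of_pos (abs_pos.mpr (hfne u hu)) _)
    · obtain ⟨a, ha⟩ := hAne
      exact ⟨a, by exact_mod_cast ha⟩
  -- opposite sign outside A (for adjacent vertices)
  have hopp : ∀ u ∈ A, ∀ v, G.Adj u v → v ∉ A →
      ((∀ w ∈ A, 0 < f w) → f v ≤ 0) ∧ ((∀ w ∈ A, f w < 0) → 0 ≤ f v) := by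
    intro u hu v huv hv
    have hgen : ∀ (P : ℝ → Prop), (∀ w ∈ (A : Set V), P (f w)) → P (f v) →
        ((∀ w ∈ (A : Set V), 0 < f w) ∨ (∀ w ∈ (A : Set V), f w < 0)) →
        (P = fun x => 0 < x) ∨ (P = fun x => x < 0) → (0 : ℝ) = 1 → False := by
      intro _ _ _ _ _ h; exact absurd h (by norm_num)
    constructor
    · intro hpos
      by_contra hfv
      push_neg at hfv
      have hvBd : v ∉ Bd := fun h => by
        have := heig.1 v h; rw [this] at hfv; exact lt_irrefl 0 hfv
      have hBsub : insert v (A : Set V) ⊆ Bdᶜ := by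
        intro x hx
        rcases hx with h | h
        · subst h; exact hvBd
        · exact hAint h
      have hBsgn : ∀ w ∈ insert v (A : Set V), 0 < f w := by
        intro w hw
        rcases hw with h | h
        · subst h; exact hfv
        · exact hpos w (by exact_mod_cast h)
      have hBconn := connected_insert' G hAconn (Finset.mem_coe.mpr hu) huv
      have hB := hmax _ (Set.subset_insert _ _) hBsub (Or.inl hBsgn) hBconn
      have : v ∈ (A : Set V) := hB ▸ Set.mem_insert v _
      exact hv (by exact_mod_cast this)
    · intro hneg
      by_contra hfv
      push_neg at hfv
      have hvBd : v ∉ Bd := fun h => by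
        have := heig.1 v h; rw [this] at hfv; exact lt_irrefl 0 hfv
      have hBsub : insert v (A : Set V) ⊆ Bdᶜ := by
        intro x hx
        rcases hx with h | h
        · subst h; exact hvBd
        · exact hAint h
      have hBsgn : ∀ w ∈ insert v (A : Set V), f w < 0 := by
        intro w hw
        rcases hw with h | h
        · subst h; exact hfv
        · exact hneg w (by exact_mod_cast h)
      have hBconn := connected_insert' G hAconn (Finset.mem_coe.mpr hu) huv
      have hB := hmax _ (Set.subset_insert _ _) hBsub (Or.inr hBsgn) hBconn
      have : v ∈ (A : Set V) := hB ▸ Set.mem_insert v _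
      exact hv (by exact_mod_cast this)
  -- summed eigen-equation over A
  have heq : ∑ u ∈ A, ∑ v ∈ G.neighborFinset u, F u v
      = lam * ∑ u ∈ A, ν u * (|f u| ^ (p - 2) * f u) := by
    rw [Finset.mul_sum]
    refine Finset.sum_congr rfl fun u hu => ?_
    have huBd : u ∉ Bd := hAint (Finset.mem_coe.mpr hu)
    rw [heig.2 u huBd]; ring
  -- split inner sum
  have hsplit : ∀ u, ∑ v ∈ G.neighborFinset u, F u v =
      (∑ v ∈ (G.neighborFinset u).filter (fun v => v ∈ A), F u v) +
      ∑ v ∈ (G.neighborFinset u).filter (fun v => v ∉ A), F u v := by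
    intro u
    exact (Finset.sum_filter_add_sum_filter_not _ _ _).symm
  -- internal edges cancel
  have hint : ∑ u ∈ A, ∑ v ∈ (G.neighborFinset u).filter (fun v => v ∈ A), F u v = 0 := by
    have h1 : ∀ u, (G.neighborFinset u).filter (fun v => v ∈ A)
        = A.filter (fun v => G.Adj u v) := by
      intro u; ext v; simp [SimpleGraph.mem_neighborFinset, and_comm]
    simp_rw [h1, Finset.sum_filter]
    apply cancel_antisym
    intro u v
    by_cases h : G.Adj u v
    · rw [if_pos h, if_pos h.symm, hF]
      simp only
      rw [hωs u v, abs_sub_comm]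
      ring
    · rw [if_neg h, if_neg (fun h' => h h'.symm), neg_zero]
  -- rewrite sum of F
  have hsum : ∑ u ∈ A, ∑ v ∈ (G.neighborFinset u).filter (fun v => v ∉ A), F u v
      = lam * ∑ u ∈ A, ν u * (|f u| ^ (p - 2) * f u) := by
    have h2 : ∑ u ∈ A, ∑ v ∈ G.neighborFinset u, F u v
        = ∑ u ∈ A, ((∑ v ∈ (G.neighborFinset u).filter (fun v => v ∈ A), F u v) +
            ∑ v ∈ (G.neighborFinset u).filter (fun v => v ∉ A), F u v) :=
      Finset.sum_congr rfl fun u _ => hsplit u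
    rw [← heq, h2, Finset.sum_add_distrib, hint, zero_add]
  rw [eq_div_iff hD.ne']
  rcases hsgn with hpos | hneg
  · -- positive case
    have hL : ∑ u ∈ A, ∑ v ∈ (G.neighborFinset u).filter (fun v => v ∉ A), F u v
        = ∑ u ∈ A, ∑ v ∈ (G.neighborFinset u).filter (fun v => v ∉ A),
            ω u v ^ p * |f u - f v| ^ (p - 1) := by
      refine Finset.sum_congr rfl fun u hu => Finset.sum_congr rfl fun v hv => ?_
      rw [Finset.mem_filter, SimpleGraph.mem_neighborFinset] at hv
      have hfv : f v ≤ 0 :=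
        (hopp u hu v hv.1 hv.2).1 (fun w hw => hpos w (by exact_mod_cast hw))
      have hx : 0 < f u - f v := by
        have := hpos u (Finset.mem_coe.mpr hu); linarith
      rw [hF]; simp only
      rw [mul_assoc, aux_pos' hx]
    have hR : ∑ u ∈ A, ν u * (|f u| ^ (p - 2) * f u)
        = ∑ u ∈ A, ν u * |f u| ^ (p - 1) := by
      refine Finset.sum_congr rfl fun u hu => ?_
      rw [aux_pos' (hpos u (Finset.mem_coe.mpr hu))]
    rw [hL, hR] at hsum
    linarith [hsum]
  · -- negative case
    have hL : ∑ u ∈ A, ∑ v ∈ (G.neighborFinset u).filter (fun v => v ∉ A), F u v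
        = -∑ u ∈ A, ∑ v ∈ (G.neighborFinset u).filter (fun v => v ∉ A),
            ω u v ^ p * |f u - f v| ^ (p - 1) := by
      rw [← Finset.sum_neg_distrib]
      refine Finset.sum_congr rfl fun u hu => ?_
      rw [← Finset.sum_neg_distrib]
      refine Finset.sum_congr rfl fun v hv => ?_
      rw [Finset.mem_filter, SimpleGraph.mem_neighborFinset] at hv
      have hfv : 0 ≤ f v :=
        (hopp u hu v hv.1 hv.2).2 (fun w hw => hneg w (by exact_mod_cast hw))
      have hx : f u - f v < 0 := by
        have := hneg u (Finset.mem_coe.mpr hu); linarith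
      rw [hF]; simp only
      rw [mul_assoc, aux_neg' hx]
      ring
    have hR : ∑ u ∈ A, ν u * (|f u| ^ (p - 2) * f u)
        = -∑ u ∈ A, ν u * |f u| ^ (p - 1) := by
      rw [← Finset.sum_neg_distrib]
      refine Finset.sum_congr rfl fun u hu => ?_
      rw [aux_neg' (hneg u (Finset.mem_coe.mpr hu))]
      ring
    rw [hL, hR] at hsum
    linarith [hsum]
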